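/- Let g : ℕ → ℝ, B ∈ ℝ, and let C be a finite set with reductions r : C → ℕ → ℝ≥0 satisfying the layer-dominance condition. Define feasibility of E ⊆ C as g(ℓ) − Σ_{h∈E} r(h)(ℓ) ≤ B for all ℓ in a finite checkpoint set Λ. If the full set C is feasible, then the greedy procedure that adds candidates in decreasing layer order, stopping as soon as feasibility holds, terminates with a feasible set E_greedy satisfying |E_greedy| = min{|E| : E ⊆ C feasible}. -/

import Mathlib

/-- Proposition 1 (optimality of GreedyEarlyPruning, Binary-HeatKV): the greedy
procedure that adds candidates in decreasing layer order and stops at the first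
feasible prefix returns a feasible set of minimum cardinality. -/
theorem stmt_11 {ι : Type*} [DecidableEq ι]
    (C : Finset ι) (layer : ι → ℕ) (r : ι → ℕ → ℝ)
    (g : ℕ → ℝ) (B : ℝ) (Λ : Finset ℕ)
    (hrnonneg : ∀ h ∈ C, ∀ ℓ, 0 ≤ r h ℓ)
    (hdom : ∀ h₁ ∈ C, ∀ h₂ ∈ C, layer h₂ ≤ layer h₁ → ∀ ℓ ∈ Λ, r h₂ ℓ ≤ r h₁ ℓ)
    (feasible : Finset ι → Prop)
    (hfeasible : ∀ E, feasible E ↔ ∀ ℓ ∈ Λ, g ℓ - ∑ h ∈ E, r h ℓ ≤ B)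
    (hCfeas : feasible C)
    -- an enumeration of `C` in decreasing layer order
    (ord : ℕ → ι)
    (hordinj : ∀ i < C.card, ∀ j < C.card, ord i = ord j → i = j)
    (hordC : (Finset.range C.card).image ord = C)
    (horddec : ∀ i j, i ≤ j → j < C.card → layer (ord j) ≤ layer (ord i))
    -- greedy stopping index: first prefix that is feasible
    (n₀ : ℕ) (hn₀le : n₀ ≤ C.card)
    (hn₀feas : feasible ((Finset.range n₀).image ord))
    (hn₀min : ∀ m < n₀, ¬ feasible ((Finset.range m).image ord)) :
    ∀ E ⊆ C, feasible E → ((Finset.range n₀).image ord).card ≤ E.card := by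
  -- Main exchange lemma: any k-subset of C is dominated by the first k of ord.
  have main : ∀ k, k ≤ C.card → ∀ E ⊆ C, E.card = k → ∀ ℓ ∈ Λ,
      ∑ h ∈ E, r h ℓ ≤ ∑ i ∈ Finset.range k, r (ord i) ℓ := by
    intro k
    induction k with
    | zero =>
      intro _ E _ hcard ℓ _
      rw [Finset.card_eq_zero] at hcard
      subst hcard; simp
    | succ k ih =>
      intro hk E hEC hcard ℓ hℓ
      have hne : E.Nonempty := Finset.card_pos.mp (by omega)
      obtain ⟨h, hhE, hmin⟩ := Finset.exists_min_image E layer hne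
      have hkC : k < C.card := by omega
      have hlay : layer h ≤ layer (ord k) := by
        by_contra hc
        push_neg at hc
        have hsub : E ⊆ (Finset.range k).image ord := by
          intro e he
          have heC : e ∈ C := hEC he
          rw [← hordC] at heC
          obtain ⟨j, hj, hje⟩ := Finset.mem_image.mp heC
          rw [Finset.mem_range] at hj
          have hjk : j < k := by
            by_contra hjk
            push_neg at hjk
            have h1 := horddec k j hjk hj
            have h2 := hmin e he
            rw [hje] at h1
            omega
          exact Finset.mem_image.mpr ⟨j, Finset.mem_range.mpr hjk, hje⟩
        have h1 := Finset.card_le_card hsub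
        have h2 := Finset.card_image_le (f := ord) (s := Finset.range k)
        rw [Finset.card_range] at h2
        omega
      have hordkC : ord k ∈ C := by
        rw [← hordC]
        exact Finset.mem_image.mpr ⟨k, Finset.mem_range.mpr hkC, rfl⟩
      have hrle : r h ℓ ≤ r (ord k) ℓ := hdom (ord k) hordkC h (hEC hhE) hlay ℓ hℓ
      have hE' := ih (by omega) (E.erase h) ((Finset.erase_subset _ _).trans hEC)
        (by rw [Finset.card_erase_of_mem hhE, hcard]; omega)
      calc ∑ h' ∈ E, r h' ℓ = ∑ h' ∈ E.erase h, r h' ℓ + r h ℓ :=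
            (Finset.sum_erase_add E _ hhE).symm
        _ ≤ ∑ i ∈ Finset.range k, r (ord i) ℓ + r (ord k) ℓ :=
            add_le_add (hE' ℓ hℓ) hrle
        _ = ∑ i ∈ Finset.range (k + 1), r (ord i) ℓ :=
            (Finset.sum_range_succ _ _).symm
  intro E hEC hEfeas
  have hcardprefix : ((Finset.range n₀).image ord).card = n₀ := by
    rw [Finset.card_image_of_injOn, Finset.card_range]
    intro i hi j hj hij
    rw [Finset.mem_coe, Finset.mem_range] at hi hj
    exact hordinj i (by omega) j (by omega) hij
  rw [hcardprefix]
  by_contra hlt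
  push_neg at hlt
  set m := E.card with hm
  have hmC : m ≤ C.card := Finset.card_le_card hEC
  have : feasible ((Finset.range m).image ord) := by
    rw [hfeasible]
    intro ℓ hℓ
    have hsum : ∑ h ∈ (Finset.range m).image ord, r h ℓ =
        ∑ i ∈ Finset.range m, r (ord i) ℓ := by
      apply Finset.sum_image
      intro i hi j hj hij
      rw [Finset.mem_coe, Finset.mem_range] at hi hj
      exact hordinj i (by omega) j (by omega) hij
    have hEle := main m hmC E hEC rfl ℓ hℓ
    have hfeasE := (hfeasible E).mp hEfeas ℓ hℓ
    rw [hsum]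
    linarith
  exact hn₀min m hlt this
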